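/- Fix prior channel moments m2 > 0 and m4 > 0. Then the MMSE filter is strictly worse than the MVU filter for the zeroth-order excess MSE with random channel: Me_rc(f_MVU) < Me_rc(f_MMSE), where f_MVU = x/‖x‖² and f_MMSE = m2·x/(m2·‖x‖² + σw²). (The MMSE channel estimator does not zero the gradient of [MSE_xe^rc(ZF)]_0 and is not optimal for this metric.) -/
import Mathlib


open MeasureTheory

/-- `φ(f) = fᴴ x = Σᵢ conj(fᵢ)·xᵢ`. -/
noncomputable def phi {B : ℕ} (x f : Fin B → ℂ) : ℂ :=
  ∑ i, (starRingEnd ℂ) (f i) * x i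

/-- Squared Euclidean norm `‖f‖² = Σᵢ |fᵢ|²`. -/
noncomputable def nsq {B : ℕ} (f : Fin B → ℂ) : ℝ :=
  ∑ i, Complex.normSq (f i)

/-- Zeroth-order excess MSE of the ZF equalizer, random channel with prior
moments `m2 = E[|h|²]` and `m4 = E[|h|⁴]`. -/
noncomputable def MeRc {B : ℕ} (σx2 σw2 m2 m4 : ℝ) (x f : Fin B → ℂ) : ℝ :=
  (Complex.normSq (phi x f - 1) * (m4 * σx2 + m2 * σw2) +
      σw2 * nsq f * (m2 * σx2 + σw2)) /
    (m4 * Complex.normSq (phi x f) + m2 * σw2 * nsq f)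

/-- The MVU channel-estimating filter `f_MVU = x / ‖x‖²`. -/
noncomputable def fMVU {B : ℕ} (x : Fin B → ℂ) : Fin B → ℂ :=
  fun i => x i / (nsq x : ℂ)

/-- The MMSE channel-estimating filter `f_MMSE = m2·x / (m2‖x‖² + σw²)`. -/
noncomputable def fMMSE {B : ℕ} (σw2 m2 : ℝ) (x : Fin B → ℂ) : Fin B → ℂ :=
  fun i => (m2 : ℂ) * x i / ((m2 * nsq x + σw2 : ℝ) : ℂ)

lemma phi_scalar {B : ℕ} (r : ℝ) (x : Fin B → ℂ) :
    phi x (fun i => (r : ℂ) * x i) = ((r * nsq x : ℝ) : ℂ) := by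
  unfold phi nsq
  push_cast
  rw [Finset.mul_sum]
  refine Finset.sum_congr rfl fun i _ => ?_
  simp only [map_mul, Complex.conj_ofReal]
  rw [mul_assoc, mul_comm ((starRingEnd ℂ) (x i)), Complex.mul_conj]

lemma nsq_scalar {B : ℕ} (r : ℝ) (x : Fin B → ℂ) :
    nsq (fun i => (r : ℂ) * x i) = r ^ 2 * nsq x := by
  unfold nsq
  rw [Finset.mul_sum]
  refine Finset.sum_congr rfl fun i _ => ?_
  rw [Complex.normSq_mul, Complex.normSq_ofReal]; ring

lemma MeRc_scalar {B : ℕ} (σx2 σw2 m2 m4 r : ℝ) (x : Fin B → ℂ) :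
    MeRc σx2 σw2 m2 m4 x (fun i => (r : ℂ) * x i) =
      ((r * nsq x - 1) ^ 2 * (m4 * σx2 + m2 * σw2) +
        σw2 * (r ^ 2 * nsq x) * (m2 * σx2 + σw2)) /
      (m4 * (r * nsq x) ^ 2 + m2 * σw2 * (r ^ 2 * nsq x)) := by
  unfold MeRc
  rw [phi_scalar, nsq_scalar]
  have h1 : ((r * nsq x : ℝ) : ℂ) - 1 = ((r * nsq x - 1 : ℝ) : ℂ) := by push_cast; ring
  rw [h1, Complex.normSq_ofReal, Complex.normSq_ofReal]
  ring_nf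

/-- The MMSE filter is strictly worse than the MVU filter for the zeroth-order
excess MSE with random channel. -/
theorem mmse_strictly_worse_than_mvu_excess_mse_rc
    (B : ℕ) (hB : 1 ≤ B) (x : Fin B → ℂ) (hx : x ≠ 0)
    (σx2 σw2 : ℝ) (hσx : 0 < σx2) (hσw : 0 < σw2)
    (m2 m4 : ℝ) (hm2 : 0 < m2) (hm4 : 0 < m4) :
    MeRc σx2 σw2 m2 m4 x (fMVU x) < MeRc σx2 σw2 m2 m4 x (fMMSE σw2 m2 x) := by
  set s := nsq x with hsdef
  have hs : 0 < s := by
    obtain ⟨i, hi⟩ := Function.ne_iff.mp hx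
    have h1 : 0 < Complex.normSq (x i) := Complex.normSq_pos.mpr hi
    have h2 : Complex.normSq (x i) ≤ s :=
      Finset.single_le_sum (f := fun j => Complex.normSq (x j))
        (fun j _ => Complex.normSq_nonneg _) (Finset.mem_univ i)
    linarith
  have hd : 0 < m2 * s + σw2 := by positivity
  have hMVU : fMVU x = fun i => ((1 / s : ℝ) : ℂ) * x i := by
    funext i
    simp only [fMVU, ← hsdef]
    push_cast
    ring
  have hMMSE : fMMSE σw2 m2 x = fun i => ((m2 / (m2 * s + σw2) : ℝ) : ℂ) * x i := by
    funext i
    simp only [fMMSE, ← hsdef]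
    push_cast
    ring
  rw [hMVU, hMMSE, MeRc_scalar, MeRc_scalar, ← hsdef]
  set A := m4 * σx2 + m2 * σw2 with hA
  set C := m2 * σx2 + σw2 with hC
  have hApos : 0 < A := by positivity
  have hCpos : 0 < C := by positivity
  set E := m4 * s + m2 * σw2 with hE
  have hEpos : 0 < E := by positivity
  have e1 : ((1 / s * s - 1) ^ 2 * A + σw2 * ((1 / s) ^ 2 * s) * C) /
      (m4 * (1 / s * s) ^ 2 + m2 * σw2 * ((1 / s) ^ 2 * s)) = σw2 * C / E := by
    rw [hE]
    field_simp
    ring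
  have e2 : ((m2 / (m2 * s + σw2) * s - 1) ^ 2 * A +
        σw2 * ((m2 / (m2 * s + σw2)) ^ 2 * s) * C) /
      (m4 * (m2 / (m2 * s + σw2) * s) ^ 2 +
        m2 * σw2 * ((m2 / (m2 * s + σw2)) ^ 2 * s)) =
      σw2 * (σw2 * A + m2 ^ 2 * s * C) / (m2 ^ 2 * s * E) := by
    rw [hE]
    have hd' : m2 * s + σw2 ≠ 0 := ne_of_gt hd
    field_simp
    ring
  rw [e1, e2]
  rw [div_lt_div_iff₀ hEpos (by positivity)]
  have key : 0 < σw2 * σw2 * A * E := by positivity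
  nlinarith [key]
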